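/- Completeness of ADL with respect to the WFS: Let D = ⟨R, C, ∅⟩ be a defeasible theory such that R_u = ∅ and the conflict sets of C are minimal (C = C_MIN), and let Π be the logic program translation of D. Then for every p ∈ Lit(D): (1) if Π ⊨_WFS p then D ⊨_ADL p, and (2) if Π ⊣_WFS p then D ⊣_ADL p. -/

import Mathlib

namespace DLWFS

universe u

/-- Ground literals over a type `A` of atoms: atoms and their classical complements. -/
inductive Lit (A : Type u) : Type u where
  | pos : A → Lit A
  | neg : A → Lit A

/-- The classical complement `p̄` of a literal `p`. -/
def Lit.compl {A : Type u} : Lit A → Lit A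
  | .pos a => .neg a
  | .neg a => .pos a

/-- The three kinds of rules of a defeasible theory. -/
inductive RuleKind : Type where
  | strict
  | defeasible
  | defeater
deriving DecidableEq

/-- A rule of a defeasible theory: a kind, a body (a set of literals) and a head literal. -/
structure DRule (A : Type u) where
  kind : RuleKind
  body : Set (Lit A)
  head : Lit A

/-- A defeasible theory `D = ⟨R, C, ≺⟩`. -/
structure DTheory (A : Type u) where
  rules : Set (DRule A)
  conflicts : Set (Set (Lit A))
  prec : DRule A → DRule A → Prop

namespace DTheory

variable {A : Type u}

/-- The strict rules `R_s`. -/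
def Rs (D : DTheory A) : Set (DRule A) := {r ∈ D.rules | r.kind = RuleKind.strict}

/-- The defeasible rules `R_d`. -/
def Rd (D : DTheory A) : Set (DRule A) := {r ∈ D.rules | r.kind = RuleKind.defeasible}

/-- The defeater rules `R_u`. -/
def Ru (D : DTheory A) : Set (DRule A) := {r ∈ D.rules | r.kind = RuleKind.defeater}

/-- `C[p]`: the conflict sets containing literal `p`. -/
def Cset (D : DTheory A) (p : Lit A) : Set (Set (Lit A)) := {c ∈ D.conflicts | p ∈ c}

/-- Structural conditions in the definition of a defeasible theory: a countable set of
rules with finite bodies, a countable set of finite conflict sets containing every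
minimal conflict set `{p, ¬p}`, and an acyclic priority relation over non-strict rules. -/
def WellFormed (D : DTheory A) : Prop :=
  D.rules.Countable ∧ D.conflicts.Countable ∧
  (∀ r ∈ D.rules, r.body.Finite) ∧
  (∀ c ∈ D.conflicts, c.Finite) ∧
  (∀ p : A, ({Lit.pos p, Lit.neg p} : Set (Lit A)) ∈ D.conflicts) ∧
  (∀ r s, D.prec r s → r.kind ≠ RuleKind.strict ∧ s.kind ≠ RuleKind.strict) ∧
  (∀ r, ¬ Relation.TransGen D.prec r r)

/-- `C = C_MIN`: the conflict sets are exactly the minimal ones `{p, ¬p}`. -/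
def MinimalConflicts (D : DTheory A) : Prop :=
  D.conflicts = {c | ∃ p : A, c = ({Lit.pos p, Lit.neg p} : Set (Lit A))}

end DTheory

/-- A 3-valued interpretation: a pair `⟨T, F⟩` of sets. -/
abbrev Interp (L : Type u) : Type u := Set L × Set L

variable {A : Type u}

/-- `S` is ADL-unfounded with respect to theory `D` and interpretation `I = ⟨T, F⟩`. -/
def ADLUnfounded (D : DTheory A) (I : Interp (Lit A)) (S : Set (Lit A)) : Prop :=
  ∀ p ∈ S,
    (∀ r ∈ D.Rs, r.head = p → (r.body ∩ (I.2 ∪ S)).Nonempty) ∧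
    (∀ r ∈ D.Rd, r.head = p →
      (r.body ∩ (I.2 ∪ S)).Nonempty ∨
      ∃ c ∈ D.conflicts, p ∈ c ∧
        ∀ q ∈ c \ {p}, ∃ s ∈ D.rules, s.head = q ∧ s.body ⊆ I.1 ∧
          (D.prec r s ∨ s.kind = RuleKind.strict))

/-- `S` is NDL-unfounded with respect to theory `D` and interpretation `I = ⟨T, F⟩`. -/
def NDLUnfounded (D : DTheory A) (I : Interp (Lit A)) (S : Set (Lit A)) : Prop :=
  ∀ p ∈ S,
    (∀ r ∈ D.Rs, r.head = p → (r.body ∩ (I.2 ∪ S)).Nonempty) ∧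
    (∀ r ∈ D.Rd, r.head = p →
      (r.body ∩ (I.2 ∪ S)).Nonempty ∨
      ∃ c ∈ D.conflicts, p ∈ c ∧
        ∀ q ∈ c \ {p}, ∃ s ∈ D.rules, s.head = q ∧ s.body ⊆ I.1 ∧
          ¬ D.prec s r)

/-- `U_D(I)` for ADL: the union of all ADL-unfounded sets. -/
def UA (D : DTheory A) (I : Interp (Lit A)) : Set (Lit A) :=
  ⋃₀ {S | ADLUnfounded D I S}

/-- `U_D(I)` for NDL: the union of all NDL-unfounded sets. -/
def UN (D : DTheory A) (I : Interp (Lit A)) : Set (Lit A) :=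
  ⋃₀ {S | NDLUnfounded D I S}

/-- `T_D(I)`: the literals having a witness of provability with respect to `I = ⟨T, F⟩`. -/
def TD (D : DTheory A) (I : Interp (Lit A)) : Set (Lit A) :=
  {p | ∃ r ∈ D.rules, r.head = p ∧ r.body ⊆ I.1 ∧
    (r.kind = RuleKind.strict ∨
      (r.kind = RuleKind.defeasible ∧
        ∀ c ∈ D.conflicts, p ∈ c →
          ∃ q ∈ c \ {p}, ∀ s ∈ D.rules, s.head = q →
            (D.prec s r ∨ (s.body ∩ I.2).Nonempty)))}

/-- `W_D` for ADL. -/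
def WA (D : DTheory A) (I : Interp (Lit A)) : Interp (Lit A) := (TD D I, UA D I)

/-- `W_D` for NDL. -/
def WN (D : DTheory A) (I : Interp (Lit A)) : Interp (Lit A) := (TD D I, UN D I)

/-- `I` is the well-founded model for the operator `W`: the least fixpoint of `W`
(componentwise order). -/
def IsWFModel {L : Type u} (W : Interp L → Interp L) (I : Interp L) : Prop :=
  W I = I ∧ ∀ J, W J = J → I.1 ⊆ J.1 ∧ I.2 ⊆ J.2

/-- A rule of a normal logic program: `head ← pos, ∼neg`. -/
structure NRule (A : Type u) where
  head : A
  pos : Set A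
  neg : Set A

/-- A normal logic program: a set of rules. -/
abbrev NProgram (A : Type u) : Type u := Set (NRule A)

/-- Structural conditions in the definition of a normal logic program: a countable
set of ground rules with finite bodies. -/
def NProgram.WellFormed (P : NProgram A) : Prop :=
  P.Countable ∧ ∀ r ∈ P, r.pos.Finite ∧ r.neg.Finite

/-- The immediate consequence operator `T_Π` on 3-valued interpretations. -/
def TP (P : NProgram A) (I : Interp A) : Set A :=
  {a | ∃ r ∈ P, r.head = a ∧ r.pos ⊆ I.1 ∧ r.neg ⊆ I.2}

/-- `S` is an unfounded set of program `P` with respect to interpretation `I = ⟨T, F⟩`. -/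
def PUnfounded (P : NProgram A) (I : Interp A) (S : Set A) : Prop :=
  ∀ p ∈ S, ∀ r ∈ P, r.head = p →
    (r.pos ∩ (I.2 ∪ S)).Nonempty ∨ (r.neg ∩ I.1).Nonempty

/-- `U_Π(I)`: the greatest unfounded set (union of all unfounded sets). -/
def UP (P : NProgram A) (I : Interp A) : Set A :=
  ⋃₀ {S | PUnfounded P I S}

/-- `W_Π(I) = ⟨T_Π(I), U_Π(I)⟩`. -/
def WP (P : NProgram A) (I : Interp A) : Interp A := (TP P I, UP P I)

/-- Transfinite iteration of an operator `W` from `⊥`, taking suprema at limit ordinals. -/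
noncomputable def iterW {α : Type*} [CompleteLattice α] (W : α → α) : Ordinal.{0} → α :=
  fun o =>
    Ordinal.limitRecOn (motive := fun _ => α) o ⊥ (fun _ ih => W ih)
      (fun o' _ ih => ⨆ x : Set.Iio o', ih x.1 x.2)

/-- One step of the immediate consequence operator for a set of defeasible-theory rules. -/
def TRstep (R : Set (DRule A)) (S : Set (Lit A)) : Set (Lit A) :=
  {p | ∃ r ∈ R, r.head = p ∧ r.body ⊆ S}

/-- The finite iterates `T_R ↑ n`. -/
def TRiter (R : Set (DRule A)) : ℕ → Set (Lit A)
  | 0 => ∅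
  | n + 1 => TRstep R (TRiter R n)

/-- `Cl(R) = T_R ↑ ω`. -/
def ClR (R : Set (DRule A)) : Set (Lit A) := ⋃ n, TRiter R n

/-- The `α`-reduct `D_α^S` of a defeasible theory. -/
def alphaReduct (D : DTheory A) (S : Set (Lit A)) : Set (DRule A) :=
  D.Rs ∪ {r ∈ D.Rd | ∀ c ∈ D.conflicts, r.head ∈ c → ∃ q ∈ c \ {r.head}, q ∉ S}

/-- The ambiguity-propagating operator `α_D(S) = Cl(D_α^S)`. -/
def alphaOp (D : DTheory A) (S : Set (Lit A)) : Set (Lit A) := ClR (alphaReduct D S)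

/-- The `β`-reduct `D_β^S` of a defeasible theory. -/
def betaReduct (D : DTheory A) (S : Set (Lit A)) : Set (DRule A) :=
  D.Rs ∪ {r ∈ D.Rd | ∀ c ∈ D.conflicts, r.head ∈ c →
    ∃ q ∈ c \ {r.head}, ∀ s ∈ D.rules, s.head = q → (¬ s.body ⊆ S ∨ D.prec s r)}

/-- The ambiguity-blocking operator `β_D(S) = Cl(D_β^S)`. -/
def betaOp (D : DTheory A) (S : Set (Lit A)) : Set (Lit A) := ClR (betaReduct D S)

/-- `S` is an `α`-stable set of `D`. -/
def AlphaStable (D : DTheory A) (S : Set (Lit A)) : Prop := alphaOp D S = S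

/-- `S` is a `β`-stable set of `D`. -/
def BetaStable (D : DTheory A) (S : Set (Lit A)) : Prop := betaOp D S = S

/-- The sequence `X_D↑λ`: `X↑0 = ∅`, `X↑(λ+1) = β_D(β_D(X↑λ))`, unions at limits. -/
noncomputable def Xseq (D : DTheory A) : Ordinal.{0} → Set (Lit A) :=
  iterW (fun S => betaOp D (betaOp D S))

/-- The Gelfond–Lifschitz reduct `Π^S`. -/
def glReduct (P : NProgram A) (S : Set A) : NProgram A :=
  {r' | ∃ r ∈ P, r.neg ∩ S = ∅ ∧ r' = NRule.mk r.head r.pos ∅}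

/-- One step of the immediate consequence operator for a NAF-free program. -/
def TPstep (P : NProgram A) (S : Set A) : Set A :=
  {a | ∃ r ∈ P, r.head = a ∧ r.pos ⊆ S}

/-- The finite iterates `T_Π ↑ n` of a NAF-free program. -/
def TPiter (P : NProgram A) : ℕ → Set A
  | 0 => ∅
  | n + 1 => TPstep P (TPiter P n)

/-- `Cl(Π) = T_Π ↑ ω`. -/
def ClP (P : NProgram A) : Set A := ⋃ n, TPiter P n

/-- The Gelfond–Lifschitz operator `γ_Π(S) = Cl(Π^S)`. -/
def gamma (P : NProgram A) (S : Set A) : Set A := ClP (glReduct P S)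

/-- `S` is a stable model of `P`. -/
def StableModel (P : NProgram A) (S : Set A) : Prop := gamma P S = S

/-- `Prod(C[p])`: all sets obtained by choosing one literal other than `p` from each
conflict set containing `p`. -/
def ProdC (D : DTheory A) (p : Lit A) : Set (Set (Lit A)) :=
  {Q | ∃ f : Set (Lit A) → Lit A,
    (∀ c ∈ D.conflicts, p ∈ c → f c ∈ c \ {p}) ∧
    Q = f '' {c ∈ D.conflicts | p ∈ c}}

/-- The logic program translation `Π_D` of a defeasible theory `D` (negative literals
are treated as fresh atoms, so the atoms of the program are the literals of `D`). -/
def lpTrans (D : DTheory A) : NProgram (Lit A) :=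
  {r' | ∃ r ∈ D.Rs, r' = NRule.mk r.head r.body ∅} ∪
  {r' | ∃ r ∈ D.Rd, ∃ Q ∈ ProdC D r.head, r' = NRule.mk r.head r.body Q}

/-- The explicit version `Φ` of a normal program `Π`: atoms of `Φ` are the literals
over the atoms of `Π` (`¬p` being a fresh atom). -/
def explicitVer (P : NProgram A) : NProgram (Lit A) :=
  {r' | ∃ r ∈ P, r' = NRule.mk (Lit.pos r.head) (Lit.pos '' r.pos ∪ Lit.neg '' r.neg) ∅} ∪
  {r' | ∃ p : A, r' = NRule.mk (Lit.neg p) ∅ {Lit.pos p}}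

/-- The minimal conflict sets over atom type `A`. -/
def CMin (A : Type u) : Set (Set (Lit A)) :=
  {c | ∃ p : A, c = ({Lit.pos p, Lit.neg p} : Set (Lit A))}

/-- The defeasible theory translation `D_Π` of a normal program `Π`: each program rule
becomes a strict rule (default literals `∼b` becoming negative literals `¬b`), and each
atom `p` yields a presumption `∅ ⇒ ¬p`; conflict sets are minimal and `≺` is empty. -/
def dtTrans (P : NProgram A) : DTheory A :=
  { rules :=
      {e | ∃ r ∈ P, e = DRule.mk RuleKind.strict
            (Lit.pos '' r.pos ∪ Lit.neg '' r.neg) (Lit.pos r.head)} ∪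
      {e | ∃ p : A, e = DRule.mk RuleKind.defeasible ∅ (Lit.neg p)}
    conflicts := CMin A
    prec := fun _ _ => False }

/-- `M^¬ = M ∪ {¬p : p ∉ M}`, atoms being identified with positive literals. -/
def negCompl (M : Set A) : Set (Lit A) :=
  Lit.pos '' M ∪ Lit.neg '' {p | p ∉ M}

end DLWFS

namespace DLWFS

/-! With minimal conflict sets and no priorities, the translation `Π_D` turns each defeasible
rule `A ⇒ p` into `p ← A, ∼p̄`, so `p̄` being false in `Π_D` mirrors the ADL requirement that
every rule for `p̄` be blocked. Consequently, at any fixpoint `I` of `W_D` the program operators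
agree with the ADL ones: `T_Π(I) = T_D(I)` and a set is `Π`-unfounded iff it is ADL-unfounded.
So `wfm(D)` is a fixpoint of `W_Π` and contains its least fixpoint `wfm(Π)`. -/

section

variable {A : Type*}

namespace Lit

lemma compl_ne (p : Lit A) : p.compl ≠ p := by
  cases p <;> simp [compl]

@[simp]
lemma compl_compl (p : Lit A) : p.compl.compl = p := by
  cases p <;> rfl

@[simp]
lemma pair_compl_diff_self (p : Lit A) : ({p, p.compl} : Set (Lit A)) \ {p} = {p.compl} :=
  Set.insert_sdiff_self_of_notMem (Set.mem_singleton_iff.not.2 p.compl_ne.symm)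

end Lit

namespace DTheory

variable {D : DTheory A}

lemma mem_Rs_or_mem_Rd (hru : D.Ru = ∅) {r : DRule A} (hr : r ∈ D.rules) :
    r ∈ D.Rs ∨ r ∈ D.Rd := by
  cases hk : r.kind with
  | strict => exact Or.inl ⟨hr, hk⟩
  | defeasible => exact Or.inr ⟨hr, hk⟩
  | defeater => exact absurd (hru ▸ ⟨hr, hk⟩ : r ∈ (∅ : Set (DRule A))) (Set.notMem_empty r)

namespace MinimalConflicts

lemma mem_conflicts_and_mem_iff (hmin : D.MinimalConflicts) {c : Set (Lit A)} {p : Lit A} :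
    c ∈ D.conflicts ∧ p ∈ c ↔ c = {p, p.compl} := by
  rw [hmin]
  constructor
  · rintro ⟨⟨a, rfl⟩, rfl | rfl⟩
    · rfl
    · exact Set.pair_comm _ _
  · rintro rfl
    cases p with
    | pos a => exact ⟨⟨a, rfl⟩, Set.mem_insert _ _⟩
    | neg a => exact ⟨⟨a, Set.pair_comm _ _⟩, Set.mem_insert _ _⟩

lemma forall_conflict_iff (hmin : D.MinimalConflicts) {p : Lit A} {P : Set (Lit A) → Prop} :
    (∀ c ∈ D.conflicts, p ∈ c → P c) ↔ P {p, p.compl} := by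
  simp only [← and_imp, hmin.mem_conflicts_and_mem_iff, forall_eq]

lemma exists_conflict_iff (hmin : D.MinimalConflicts) {p : Lit A} {P : Set (Lit A) → Prop} :
    (∃ c ∈ D.conflicts, p ∈ c ∧ P c) ↔ P {p, p.compl} := by
  simp only [← and_assoc, hmin.mem_conflicts_and_mem_iff, exists_eq_left]

lemma prodC_eq (hmin : D.MinimalConflicts) (p : Lit A) : ProdC D p = {{p.compl}} := by
  have hC : {c | c ∈ D.conflicts ∧ p ∈ c} = {{p, p.compl}} :=
    Set.ext fun _ => hmin.mem_conflicts_and_mem_iff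
  ext Q
  simp only [ProdC, hC, Set.image_singleton, hmin.forall_conflict_iff, Lit.pair_compl_diff_self,
    Set.mem_singleton_iff]
  exact ⟨fun ⟨f, hf, hQ⟩ => hQ.trans (congrArg _ hf), fun hQ => ⟨fun _ => p.compl, rfl, hQ⟩⟩

lemma mem_lpTrans_iff (hmin : D.MinimalConflicts) {r' : NRule (Lit A)} :
    r' ∈ lpTrans D ↔ (∃ r ∈ D.Rs, r' = ⟨r.head, r.body, ∅⟩) ∨
      ∃ r ∈ D.Rd, r' = ⟨r.head, r.body, {r.head.compl}⟩ := by
  simp only [lpTrans, hmin.prodC_eq, Set.mem_union, Set.mem_ofPred_eq, Set.mem_singleton_iff,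
    exists_eq_left]

end MinimalConflicts

end DTheory

open DTheory

lemma mem_TD_iff {D : DTheory A} (hmin : D.MinimalConflicts) (hprec : ∀ r s, ¬ D.prec r s)
    {I : Interp (Lit A)} {p : Lit A} :
    p ∈ TD D I ↔ ∃ r ∈ D.rules, r.head = p ∧ r.body ⊆ I.1 ∧
      (r.kind = .strict ∨ r.kind = .defeasible ∧
        ∀ s ∈ D.rules, s.head = p.compl → (s.body ∩ I.2).Nonempty) := by
  simp only [TD, Set.mem_ofPred_eq, hmin.forall_conflict_iff, Lit.pair_compl_diff_self,
    Set.mem_singleton_iff, exists_eq_left, hprec, false_or]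

lemma adlUnfounded_iff {D : DTheory A} (hmin : D.MinimalConflicts)
    (hprec : ∀ r s, ¬ D.prec r s) {I : Interp (Lit A)} {S : Set (Lit A)} :
    ADLUnfounded D I S ↔ ∀ p ∈ S,
      (∀ r ∈ D.Rs, r.head = p → (r.body ∩ (I.2 ∪ S)).Nonempty) ∧
      (∀ r ∈ D.Rd, r.head = p → (r.body ∩ (I.2 ∪ S)).Nonempty ∨
        ∃ s ∈ D.rules, s.head = p.compl ∧ s.body ⊆ I.1 ∧ s.kind = .strict) := by
  simp only [ADLUnfounded, hmin.exists_conflict_iff, Lit.pair_compl_diff_self,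
    Set.mem_singleton_iff, forall_eq, hprec, false_or]

lemma mem_TD_of_mem_Rs {D : DTheory A} {I : Interp (Lit A)} {r : DRule A} (hr : r ∈ D.Rs)
    (hbody : r.body ⊆ I.1) : r.head ∈ TD D I :=
  ⟨r, hr.1, rfl, hbody, Or.inl hr.2⟩

lemma adlUnfounded_UA (D : DTheory A) (I : Interp (Lit A)) : ADLUnfounded D I (UA D I) := by
  rintro p ⟨S, hS, hpS⟩
  have hsub : ∀ B : Set (Lit A), B ∩ (I.2 ∪ S) ⊆ B ∩ (I.2 ∪ UA D I) := fun _ =>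
    Set.inter_subset_inter_right _ (Set.union_subset_union_right _ (Set.subset_sUnion_of_mem hS))
  obtain ⟨hstrict, hdef⟩ := hS p hpS
  exact ⟨fun r hr hh => (hstrict r hr hh).mono (hsub _),
    fun r hr hh => (hdef r hr hh).imp_left (·.mono (hsub _))⟩

lemma mem_UA_of_forall_body_inter_nonempty {D : DTheory A} {I : Interp (Lit A)} {q : Lit A}
    (h : ∀ s ∈ D.rules, s.head = q → (s.body ∩ I.2).Nonempty) : q ∈ UA D I := by
  refine ⟨{q}, ?_, rfl⟩
  intro x hx
  subst x
  have hblocked : ∀ s ∈ D.rules, s.head = q → (s.body ∩ (I.2 ∪ {q})).Nonempty := fun s hs hh =>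
    (h s hs hh).mono (Set.inter_subset_inter_right _ Set.subset_union_left)
  exact ⟨fun s hs => hblocked s hs.1, fun s hs hh => Or.inl (hblocked s hs.1 hh)⟩

lemma TD_subset_TP_lpTrans {D : DTheory A} (hmin : D.MinimalConflicts)
    (hprec : ∀ r s, ¬ D.prec r s) {I : Interp (Lit A)} (hF : UA D I ⊆ I.2) :
    TD D I ⊆ TP (lpTrans D) I := by
  intro p hp
  obtain ⟨r, hr, rfl, hbody, hstrict | ⟨hdef, hblocked⟩⟩ := (mem_TD_iff hmin hprec).1 hp
  · exact ⟨_, hmin.mem_lpTrans_iff.2 (Or.inl ⟨r, ⟨hr, hstrict⟩, rfl⟩), rfl, hbody,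
      Set.empty_subset _⟩
  · exact ⟨_, hmin.mem_lpTrans_iff.2 (Or.inr ⟨r, ⟨hr, hdef⟩, rfl⟩), rfl, hbody,
      Set.singleton_subset_iff.2 (hF (mem_UA_of_forall_body_inter_nonempty hblocked))⟩

lemma TP_lpTrans_subset_TD {D : DTheory A} (hru : D.Ru = ∅) (hmin : D.MinimalConflicts)
    (hprec : ∀ r s, ¬ D.prec r s) {I : Interp (Lit A)} (hF : ADLUnfounded D I I.2) :
    TP (lpTrans D) I ⊆ TD D I := by
  rintro _ ⟨r', hr', rfl, hpos, hneg⟩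
  rcases hmin.mem_lpTrans_iff.1 hr' with ⟨r, hr, rfl⟩ | ⟨r, hr, rfl⟩
  · exact mem_TD_of_mem_Rs hr hpos
  by_cases hblocked : ∀ s ∈ D.rules, s.head = r.head.compl → (s.body ∩ I.2).Nonempty
  · exact (mem_TD_iff hmin hprec).2 ⟨r, hr.1, rfl, hpos, Or.inr ⟨hr.2, hblocked⟩⟩
  -- `r.head.compl` is false, yet some rule `s` for it is not blocked: since `I.2` is
  -- unfounded, `s` must be overridden by a strict rule for `r.head` with a true body.
  push Not at hblocked
  obtain ⟨s, hs, hsh, hsF⟩ := hblocked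
  have hcompl := (adlUnfounded_iff hmin hprec).1 hF _ (hneg rfl)
  rw [Set.union_self] at hcompl
  rcases mem_Rs_or_mem_Rd hru hs with hsS | hsD
  · exact absurd (hcompl.1 s hsS hsh) (Set.not_nonempty_iff_eq_empty.2 hsF)
  obtain ⟨t, ht, hth, htb, htk⟩ :=
    (hcompl.2 s hsD hsh).resolve_left (Set.not_nonempty_iff_eq_empty.2 hsF)
  rw [Lit.compl_compl] at hth
  exact hth ▸ mem_TD_of_mem_Rs ⟨ht, htk⟩ htb

lemma adlUnfounded_iff_pUnfounded_lpTrans {D : DTheory A} (hmin : D.MinimalConflicts)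
    (hprec : ∀ r s, ¬ D.prec r s) {I : Interp (Lit A)} (hT : TD D I = I.1) {S : Set (Lit A)} :
    ADLUnfounded D I S ↔ PUnfounded (lpTrans D) I S := by
  rw [adlUnfounded_iff hmin hprec]
  constructor
  · intro hS x hx r' hr' hh
    rcases hmin.mem_lpTrans_iff.1 hr' with ⟨r, hr, rfl⟩ | ⟨r, hr, rfl⟩
    · exact Or.inl ((hS x hx).1 r hr hh)
    dsimp only at hh
    subst hh
    rcases (hS _ hx).2 r hr rfl with hbody | ⟨t, ht, hth, htb, htk⟩
    · exact Or.inl hbody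
    · refine Or.inr ⟨r.head.compl, rfl, ?_⟩
      rw [← hT, ← hth]
      exact mem_TD_of_mem_Rs ⟨ht, htk⟩ htb
  · intro hS x hx
    refine ⟨fun r hr hh => ?_, fun r hr hh => ?_⟩
    · rcases hS x hx _ (hmin.mem_lpTrans_iff.2 (Or.inl ⟨r, hr, rfl⟩)) hh with hbody | ⟨_, h, _⟩
      · exact hbody
      · exact absurd h (Set.notMem_empty _)
    rcases hS x hx _ (hmin.mem_lpTrans_iff.2 (Or.inr ⟨r, hr, rfl⟩)) hh with hbody | ⟨_, rfl, hT'⟩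
    · exact Or.inl hbody
    rw [← hT, (mem_TD_iff hmin hprec), hh] at hT'
    obtain ⟨s, hs, hsh, hsb, hsk | ⟨-, hblocked⟩⟩ := hT'
    · exact Or.inr ⟨s, hs, hsh, hsb, hsk⟩
    · -- the defeasible witness for `x.compl` blocks every rule for `x`, `r` included
      rw [Lit.compl_compl] at hblocked
      exact Or.inl ((hblocked r hr.1 hh).mono
        (Set.inter_subset_inter_right _ Set.subset_union_left))

lemma WP_lpTrans_eq_of_WA_eq {D : DTheory A} (hru : D.Ru = ∅) (hmin : D.MinimalConflicts)
    (hprec : ∀ r s, ¬ D.prec r s) {I : Interp (Lit A)} (hI : WA D I = I) :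
    WP (lpTrans D) I = I := by
  have hT : TD D I = I.1 := congrArg Prod.fst hI
  have hF : UA D I = I.2 := congrArg Prod.snd hI
  have hTP : TP (lpTrans D) I = I.1 := hT ▸ subset_antisymm
    (TP_lpTrans_subset_TD hru hmin hprec (hF ▸ adlUnfounded_UA D I))
    (TD_subset_TP_lpTrans hmin hprec hF.le)
  have hUP : UP (lpTrans D) I = I.2 := by
    simp only [UP, ← adlUnfounded_iff_pUnfounded_lpTrans hmin hprec hT]
    exact hF
  exact Prod.ext hTP hUP

end

theorem adl_complete_wrt_wfs_general {A : Type*} (D : DTheory A)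
    (hru : D.Ru = ∅)
    (hprec : ∀ r s, ¬ D.prec r s)
    (hmin : D.MinimalConflicts)
    (ID : Interp (Lit A)) (hID : IsWFModel (WA D) ID)
    (IP : Interp (Lit A)) (hIP : IsWFModel (WP (lpTrans D)) IP) :
    ∀ p : Lit A, (p ∈ IP.1 → p ∈ ID.1) ∧ (p ∈ IP.2 → p ∈ ID.2) := by
  have hle := hIP.2 ID (WP_lpTrans_eq_of_WA_eq hru hmin hprec hID.1)
  exact fun p => ⟨fun hp => hle.1 hp, fun hp => hle.2 hp⟩

/-- **Completeness of ADL wrt the WFS.** Let `D = ⟨R, C, ∅⟩` be a defeasible theory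
with `R_u = ∅` and minimal conflict sets, and let `Π` be its logic program
translation. For every literal `p`: if `Π ⊨_WFS p` then `D ⊨_ADL p`, and if
`Π ⊣_WFS p` then `D ⊣_ADL p`. -/
theorem adl_complete_wrt_wfs {A : Type*} (D : DTheory A)
    (hwf : D.WellFormed)
    (hru : D.Ru = ∅)
    (hprec : ∀ r s, ¬ D.prec r s)
    (hmin : D.MinimalConflicts)
    (ID : Interp (Lit A)) (hID : IsWFModel (WA D) ID)
    (IP : Interp (Lit A)) (hIP : IsWFModel (WP (lpTrans D)) IP) :
    ∀ p : Lit A, (p ∈ IP.1 → p ∈ ID.1) ∧ (p ∈ IP.2 → p ∈ ID.2) :=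
  adl_complete_wrt_wfs_general D hru hprec hmin ID hID IP hIP

end DLWFS
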